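/- arXiv:2505.14001 — 6 statements merged into one kernel-verified Lean document; each statement's English description precedes it below -/
import Mathlib

section
/- Suppose C is a reach-avoid certificate for the dynamics f and threshold ρ ∈ [0,1). Let X? ⊆ X be nonempty and suppose I := inf{C(x) : x ∈ X?} ≥ 1. Then ρ' := min(ρ, 1 − 1/I) lies in [0,1) and is reclaimable: for every localized change g̃ of f within X?, C is a reach-avoid certificate for g̃ and threshold ρ'. -/
open MeasureTheory Set

/-- A reach-avoid certificate for dynamics `g` and threshold `ρ`:
`C` is nonnegative, at most `1` on initial states, at least `1/(1-ρ)` on unsafe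
states, and satisfies the expected-decrease condition outside the target. -/
def IsReachAvoidCert {n m p : ℕ}
    (X Xstar Xunsafe X0 : Set (Fin n → ℝ))
    (μ : Measure (Fin p → ℝ))
    (π : (Fin n → ℝ) → (Fin m → ℝ))
    (g : (Fin n → ℝ) → (Fin m → ℝ) → (Fin p → ℝ) → (Fin n → ℝ))
    (C : (Fin n → ℝ) → ℝ) (ρ : ℝ) : Prop :=
  (∀ x, 0 ≤ C x) ∧
  (∀ x ∈ X0, C x ≤ 1) ∧
  (∀ x ∈ Xunsafe, 1 / (1 - ρ) ≤ C x) ∧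
  (∃ ε > 0, ∀ x ∈ X \ Xstar,
    ε ≤ ∫ w, (C x - C (g x (π x) w)) ∂μ ∨ 1 / (1 - ρ) ≤ C x)

/-- `g` is a localized change of `f` within `Xq`: the dynamics agree outside `Xq`. -/
def LocalizedChange {n m p : ℕ} (Xq : Set (Fin n → ℝ))
    (f g : (Fin n → ℝ) → (Fin m → ℝ) → (Fin p → ℝ) → (Fin n → ℝ)) : Prop :=
  ∀ x ∉ Xq, ∀ u w, g x u w = f x u w

/-- A threshold `ρ'` is reclaimable (for certificate `C`, original dynamics `f`,
changed set `Xq`): `ρ' ∈ [0,1)` and `C` certifies every localized change of `f`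
within `Xq` for threshold `ρ'`. -/
def Reclaimable {n m p : ℕ}
    (X Xstar Xunsafe X0 : Set (Fin n → ℝ))
    (μ : Measure (Fin p → ℝ))
    (π : (Fin n → ℝ) → (Fin m → ℝ))
    (f : (Fin n → ℝ) → (Fin m → ℝ) → (Fin p → ℝ) → (Fin n → ℝ))
    (Xq : Set (Fin n → ℝ))
    (C : (Fin n → ℝ) → ℝ) (ρ' : ℝ) : Prop :=
  0 ≤ ρ' ∧ ρ' < 1 ∧
  ∀ g, LocalizedChange Xq f g → IsReachAvoidCert X Xstar Xunsafe X0 μ π g C ρ'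

theorem stmt0 {n m p : ℕ}
    (X Xstar Xunsafe X0 Xq : Set (Fin n → ℝ)) (W : Set (Fin p → ℝ))
    (μ : Measure (Fin p → ℝ)) [IsProbabilityMeasure μ]
    (π : (Fin n → ℝ) → (Fin m → ℝ))
    (f : (Fin n → ℝ) → (Fin m → ℝ) → (Fin p → ℝ) → (Fin n → ℝ))
    (C : (Fin n → ℝ) → ℝ) (ρ : ℝ)
    (hXmeas : MeasurableSet X) (hWmeas : MeasurableSet W)
    (hsupp : μ Wᶜ = 0)
    (hXstar : Xstar ⊆ X) (hXunsafe : Xunsafe ⊆ X) (hX0 : X0 ⊆ X)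
    (hρ0 : 0 ≤ ρ) (hρ1 : ρ < 1)
    (hcert : IsReachAvoidCert X Xstar Xunsafe X0 μ π f C ρ)
    (hXqne : Xq.Nonempty) (hXqX : Xq ⊆ X)
    (hI : 1 ≤ sInf (C '' Xq))
    (hInt : ∀ g, LocalizedChange Xq f g →
      ∀ x, Integrable (fun w => C (g x (π x) w)) μ) :
    Reclaimable X Xstar Xunsafe X0 μ π f Xq C
      (min ρ (1 - 1 / sInf (C '' Xq))) := by
  obtain ⟨hC0, hCX0, hCuns, ε, hε, hdec⟩ := hcert
  set I := sInf (C '' Xq) with hIdef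
  have hIpos : (0:ℝ) < I := lt_of_lt_of_le one_pos hI
  have h1I : 1 / I ≤ 1 := by
    rw [div_le_one hIpos]; linarith
  have h1Ipos : 0 < 1 / I := by positivity
  set ρ' := min ρ (1 - 1 / I) with hρ'def
  have hρ'0 : 0 ≤ ρ' := le_min hρ0 (by linarith)
  have hρ'ρ : ρ' ≤ ρ := min_le_left _ _
  have hρ'1 : ρ' < 1 := lt_of_le_of_lt hρ'ρ hρ1
  have hmono : 1 / (1 - ρ') ≤ 1 / (1 - ρ) :=
    one_div_le_one_div_of_le (by linarith) (by linarith)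
  have hle : 1 / (1 - ρ') ≤ I := by
    have h1 : 1 / I ≤ 1 - ρ' := by
      have := min_le_right ρ (1 - 1 / I); linarith
    calc 1 / (1 - ρ') ≤ 1 / (1 / I) := one_div_le_one_div_of_le h1Ipos h1
    _ = I := one_div_one_div I
  have hbdd : BddBelow (C '' Xq) := ⟨0, by rintro y ⟨x, _, rfl⟩; exact hC0 x⟩
  refine ⟨hρ'0, hρ'1, fun g hg => ⟨hC0, hCX0, fun x hx => le_trans hmono (hCuns x hx),
    ε, hε, fun x hx => ?_⟩⟩
  by_cases hxq : x ∈ Xq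
  · right
    exact le_trans hle (csInf_le hbdd (mem_image_of_mem C hxq))
  · rcases hdec x hx with h | h
    · left
      have : (∫ w, (C x - C (g x (π x) w)) ∂μ) = ∫ w, (C x - C (f x (π x) w)) ∂μ := by
        refine integral_congr_ae (Filter.Eventually.of_forall fun w => ?_)
        simp only [hg x hxq]
      rw [this]; exact h
    · exact Or.inr (le_trans hmono h)
end

section
/- Let X? ⊆ X be nonempty with X? ∩ X★ = ∅, let C : ℝⁿ → ℝ be nonnegative, and suppose I := inf{C(x) : x ∈ X?} ≥ 1. If ρ̃ ∈ [0,1) with ρ̃ ≤ ρ is reclaimable, then ρ̃ ≤ min(ρ, 1 − 1/I). -/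
open MeasureTheory Set

theorem stmt1 {n m p : ℕ}
    (X Xstar Xunsafe X0 Xq : Set (Fin n → ℝ)) (W : Set (Fin p → ℝ))
    (μ : Measure (Fin p → ℝ)) [IsProbabilityMeasure μ]
    (π : (Fin n → ℝ) → (Fin m → ℝ))
    (f : (Fin n → ℝ) → (Fin m → ℝ) → (Fin p → ℝ) → (Fin n → ℝ))
    (C : (Fin n → ℝ) → ℝ) (ρ ρ' : ℝ)
    (hXmeas : MeasurableSet X) (hWmeas : MeasurableSet W)
    (hsupp : μ Wᶜ = 0)
    (hXstar : Xstar ⊆ X) (hXunsafe : Xunsafe ⊆ X) (hX0 : X0 ⊆ X)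
    (hρ0 : 0 ≤ ρ) (hρ1 : ρ < 1)
    (hC0 : ∀ x, 0 ≤ C x)
    (hXqne : Xq.Nonempty) (hXqX : Xq ⊆ X) (hdisj : Xq ∩ Xstar = ∅)
    (hI : 1 ≤ sInf (C '' Xq))
    (hInt : ∀ g, LocalizedChange Xq f g →
      ∀ x, Integrable (fun w => C (g x (π x) w)) μ)
    (hle : ρ' ≤ ρ)
    (hrec : Reclaimable X Xstar Xunsafe X0 μ π f Xq C ρ') :
    ρ' ≤ min ρ (1 - 1 / sInf (C '' Xq)) := by
  classical
  obtain ⟨hρ'0, hρ'1, hcert⟩ := hrec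
  set g : (Fin n → ℝ) → (Fin m → ℝ) → (Fin p → ℝ) → (Fin n → ℝ) :=
    fun x u w => if x ∈ Xq then x else f x u w with hg
  have hloc : LocalizedChange Xq f g := fun x hx u w => if_neg hx
  obtain ⟨_, _, _, ε, hε, h3⟩ := hcert g hloc
  have hbound : ∀ x ∈ Xq, 1 / (1 - ρ') ≤ C x := by
    intro x hx
    have hxX : x ∈ X \ Xstar := by
      refine ⟨hXqX hx, fun hxs => ?_⟩
      have : x ∈ Xq ∩ Xstar := ⟨hx, hxs⟩
      simp [hdisj] at this
    rcases h3 x hxX with h | h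
    · exfalso
      have : (fun w : Fin p → ℝ => C x - C (g x (π x) w)) = fun _ => 0 := by
        funext w; simp [hg, if_pos hx]
      rw [this] at h
      simp at h
      linarith
    · exact h
  have hIb : 1 / (1 - ρ') ≤ sInf (C '' Xq) := by
    apply le_csInf (hXqne.image C)
    rintro y ⟨x, hx, rfl⟩
    exact hbound x hx
  have hIpos : 0 < sInf (C '' Xq) := lt_of_lt_of_le one_pos hI
  have h1ρ : 0 < 1 - ρ' := by linarith
  have : 1 / sInf (C '' Xq) ≤ 1 - ρ' := (one_div_le h1ρ hIpos).mp hIb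
  exact le_min hle (by linarith)
end

section
/- Let X? ⊆ X be nonempty with X? ∩ X★ = ∅ and let C : ℝⁿ → ℝ be nonnegative. If there exists a reclaimable threshold ρ̃ ∈ [0,1), then inf{C(x) : x ∈ X?} ≥ 1. Equivalently, if inf{C(x) : x ∈ X?} < 1, then no threshold ρ̃ ∈ [0,1) is reclaimable. -/
open MeasureTheory Set

theorem stmt2 {n m p : ℕ}
    (X Xstar Xunsafe X0 Xq : Set (Fin n → ℝ)) (W : Set (Fin p → ℝ))
    (μ : Measure (Fin p → ℝ)) [IsProbabilityMeasure μ]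
    (π : (Fin n → ℝ) → (Fin m → ℝ))
    (f : (Fin n → ℝ) → (Fin m → ℝ) → (Fin p → ℝ) → (Fin n → ℝ))
    (C : (Fin n → ℝ) → ℝ)
    (hXmeas : MeasurableSet X) (hWmeas : MeasurableSet W)
    (hsupp : μ Wᶜ = 0)
    (hXstar : Xstar ⊆ X) (hXunsafe : Xunsafe ⊆ X) (hX0 : X0 ⊆ X)
    (hC0 : ∀ x, 0 ≤ C x)
    (hXqne : Xq.Nonempty) (hXqX : Xq ⊆ X) (hdisj : Xq ∩ Xstar = ∅)
    (hInt : ∀ g, LocalizedChange Xq f g →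
      ∀ x, Integrable (fun w => C (g x (π x) w)) μ)
    (hrec : ∃ ρ', Reclaimable X Xstar Xunsafe X0 μ π f Xq C ρ') :
    1 ≤ sInf (C '' Xq) := by
  classical
  obtain ⟨ρ', hρ0, hρ1, hcert⟩ := hrec
  apply le_csInf (hXqne.image C)
  rintro b ⟨x, hx, rfl⟩
  -- self-loop dynamics on Xq
  set g : (Fin n → ℝ) → (Fin m → ℝ) → (Fin p → ℝ) → (Fin n → ℝ) :=
    fun y u w => if y ∈ Xq then y else f y u w with hg
  have hloc : LocalizedChange Xq f g := by
    intro y hy u w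
    simp [hg, hy]
  obtain ⟨_, _, _, ε, hε, hdec⟩ := hcert g hloc
  have hxX : x ∈ X \ Xstar := by
    refine ⟨hXqX hx, fun hxs => ?_⟩
    have : x ∈ Xq ∩ Xstar := ⟨hx, hxs⟩
    simp [hdisj] at this
  have hone : 1 / (1 - ρ') ≤ C x := by
    rcases hdec x hxX with h | h
    · exfalso
      have : (∫ w, (C x - C (g x (π x) w)) ∂μ) = 0 := by
        have : ∀ w, C x - C (g x (π x) w) = 0 := by
          intro w; simp [hg, hx]
        simp [this]
      linarith
    · exact h
  have h1 : (1 : ℝ) ≤ 1 / (1 - ρ') :=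
    one_le_one_div (by linarith) (by linarith)
  linarith
end

section
/- Suppose C is a reach-avoid certificate for the dynamics f and threshold ρ ∈ [0,1), and X? ⊆ X is nonempty with X? ∩ X★ = ∅. Let I := inf{C(x) : x ∈ X?}. If I < 1, then no threshold ρ̃ ∈ [0,1) is reclaimable. If I ≥ 1, then ρ* := min(ρ, 1 − 1/I) is reclaimable and every reclaimable threshold ρ̃ ∈ [0,1) with ρ̃ ≤ ρ satisfies ρ̃ ≤ ρ*; that is, ρ* is the maximum reclaimable threshold at most ρ. -/
open MeasureTheory Set

open Classical in
lemma adv_bound {n m p : ℕ}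
    (X Xstar Xunsafe X0 Xq : Set (Fin n → ℝ))
    (μ : Measure (Fin p → ℝ))
    (π : (Fin n → ℝ) → (Fin m → ℝ))
    (f : (Fin n → ℝ) → (Fin m → ℝ) → (Fin p → ℝ) → (Fin n → ℝ))
    (C : (Fin n → ℝ) → ℝ) (ρ' : ℝ)
    (hXqX : Xq ⊆ X) (hdisj : Xq ∩ Xstar = ∅)
    (x₀ : Fin n → ℝ) (hx₀ : x₀ ∈ Xq)
    (hrec : Reclaimable X Xstar Xunsafe X0 μ π f Xq C ρ') :
    1 / (1 - ρ') ≤ C x₀ := by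
  set g : (Fin n → ℝ) → (Fin m → ℝ) → (Fin p → ℝ) → (Fin n → ℝ) :=
    fun x u w => if x ∈ Xq then x₀ else f x u w with hg
  have hloc : LocalizedChange Xq f g := by
    intro x hx u w
    simp [hg, hx]
  obtain ⟨_, _, _, ε, hε, hdec⟩ := hrec.2.2 g hloc
  have hxX : x₀ ∈ X \ Xstar := by
    refine ⟨hXqX hx₀, fun hs => ?_⟩
    have : x₀ ∈ Xq ∩ Xstar := ⟨hx₀, hs⟩
    simp [hdisj] at this
  rcases hdec x₀ hxX with h | h
  · exfalso
    have heq : (fun w => C x₀ - C (g x₀ (π x₀) w)) = fun _ => (0 : ℝ) := by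
      funext w
      simp [hg, hx₀]
    rw [heq] at h
    simp at h
    linarith
  · exact h

theorem stmt3 {n m p : ℕ}
    (X Xstar Xunsafe X0 Xq : Set (Fin n → ℝ)) (W : Set (Fin p → ℝ))
    (μ : Measure (Fin p → ℝ)) [IsProbabilityMeasure μ]
    (π : (Fin n → ℝ) → (Fin m → ℝ))
    (f : (Fin n → ℝ) → (Fin m → ℝ) → (Fin p → ℝ) → (Fin n → ℝ))
    (C : (Fin n → ℝ) → ℝ) (ρ : ℝ)
    (hXmeas : MeasurableSet X) (hWmeas : MeasurableSet W)
    (hsupp : μ Wᶜ = 0)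
    (hXstar : Xstar ⊆ X) (hXunsafe : Xunsafe ⊆ X) (hX0 : X0 ⊆ X)
    (hρ0 : 0 ≤ ρ) (hρ1 : ρ < 1)
    (hcert : IsReachAvoidCert X Xstar Xunsafe X0 μ π f C ρ)
    (hXqne : Xq.Nonempty) (hXqX : Xq ⊆ X) (hdisj : Xq ∩ Xstar = ∅)
    (hInt : ∀ g, LocalizedChange Xq f g →
      ∀ x, Integrable (fun w => C (g x (π x) w)) μ) :
    (sInf (C '' Xq) < 1 →
      ¬ ∃ ρ', Reclaimable X Xstar Xunsafe X0 μ π f Xq C ρ') ∧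
    (1 ≤ sInf (C '' Xq) →
      Reclaimable X Xstar Xunsafe X0 μ π f Xq C
        (min ρ (1 - 1 / sInf (C '' Xq))) ∧
      ∀ ρ', Reclaimable X Xstar Xunsafe X0 μ π f Xq C ρ' → ρ' ≤ ρ →
        ρ' ≤ min ρ (1 - 1 / sInf (C '' Xq))) := by

  have hne : (C '' Xq).Nonempty := hXqne.image C
  have hbdd : BddBelow (C '' Xq) := by
    refine ⟨0, fun y hy => ?_⟩
    obtain ⟨x, _, rfl⟩ := hy
    exact hcert.1 x
  constructor
  · rintro hI ⟨ρ', hrec⟩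
    obtain ⟨y, hy, hylt⟩ := (csInf_lt_iff hbdd hne).1 hI
    obtain ⟨x₀, hx₀, rfl⟩ := hy
    have hb := adv_bound X Xstar Xunsafe X0 Xq μ π f C ρ' hXqX hdisj x₀ hx₀ hrec
    have h1 : (1:ℝ) ≤ 1 / (1 - ρ') := by
      rw [le_div_iff₀ (by linarith [hrec.2.1])]
      linarith [hrec.1]
    linarith
  · intro hI
    set I := sInf (C '' Xq) with hIdef
    have hIpos : 0 < I := by linarith
    have hdiv : 1 / I ≤ 1 := by
      rw [div_le_one hIpos]; exact hI
    have hdivpos : 0 < 1 / I := by positivity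
    set ρs := min ρ (1 - 1 / I) with hρs
    have hρs0 : 0 ≤ ρs := le_min hρ0 (by linarith)
    have hρs1 : ρs < 1 := lt_of_le_of_lt (min_le_left _ _) hρ1
    have hρsρ : ρs ≤ ρ := min_le_left _ _
    have hkey1 : 1 / (1 - ρs) ≤ 1 / (1 - ρ) :=
      one_div_le_one_div_of_le (by linarith) (by linarith)
    have hkey2 : 1 / (1 - ρs) ≤ I := by
      have h1 : 1 / I ≤ 1 - ρs := by
        have := min_le_right ρ (1 - 1 / I)
        simp only [hρs]; linarith
      calc 1 / (1 - ρs) ≤ 1 / (1 / I) := one_div_le_one_div_of_le hdivpos h1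
        _ = I := one_div_one_div I
    obtain ⟨hpos, h0, hun, ε, hε, hdec⟩ := hcert
    constructor
    · refine ⟨hρs0, hρs1, fun g hloc => ⟨hpos, h0, fun x hx => le_trans hkey1 (hun x hx), ε, hε, fun x hx => ?_⟩⟩
      by_cases hxq : x ∈ Xq
      · exact Or.inr (le_trans hkey2 (csInf_le hbdd ⟨x, hxq, rfl⟩))
      · rcases hdec x hx with h | h
        · left
          have heq : (fun w => C x - C (g x (π x) w)) = fun w => C x - C (f x (π x) w) := by
            funext w; rw [hloc x hxq]
          rw [heq]; exact h
        · exact Or.inr (le_trans hkey1 h)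
    · intro ρ' hrec hρ'ρ
      refine le_min hρ'ρ ?_
      by_contra hlt
      push_neg at hlt
      have h1 : 1 - ρ' < 1 / I := by linarith
      have h2 : I < 1 / (1 - ρ') := by
        have h3 : 0 < 1 - ρ' := by linarith [hrec.2.1]
        rw [lt_div_iff₀ h3]
        calc I * (1 - ρ') < I * (1 / I) := by
              exact mul_lt_mul_of_pos_left h1 hIpos
          _ = 1 := by field_simp
      obtain ⟨y, hy, hylt⟩ := (csInf_lt_iff hbdd hne).1 h2
      obtain ⟨x₀, hx₀, rfl⟩ := hy
      have hb := adv_bound X Xstar Xunsafe X0 Xq μ π f C ρ' hXqX hdisj x₀ hx₀ hrec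
      linarith
end

section
/- Suppose C is a reach-avoid certificate for the dynamics f and threshold ρ ∈ [0,1), and X? ⊆ X is nonempty with X? ∩ X★ = ∅. Let I := inf{C(x) : x ∈ X?} and let I⁻, I⁺ ∈ ℝ satisfy 1 ≤ I⁻ ≤ I ≤ I⁺. Define ρ̃⁻ := min(ρ, 1 − 1/I⁻) and ρ̃⁺ := min(ρ, 1 − 1/I⁺). Then ρ̃⁻ ≤ min(ρ, 1 − 1/I) ≤ ρ̃⁺; in particular, ρ̃⁻ is reclaimable and every reclaimable threshold ρ̃ ∈ [0,1) with ρ̃ ≤ ρ satisfies ρ̃ ≤ ρ̃⁺. -/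
open MeasureTheory Set

theorem stmt4 {n m p : ℕ}
    (X Xstar Xunsafe X0 Xq : Set (Fin n → ℝ)) (W : Set (Fin p → ℝ))
    (μ : Measure (Fin p → ℝ)) [IsProbabilityMeasure μ]
    (π : (Fin n → ℝ) → (Fin m → ℝ))
    (f : (Fin n → ℝ) → (Fin m → ℝ) → (Fin p → ℝ) → (Fin n → ℝ))
    (C : (Fin n → ℝ) → ℝ) (ρ Iminus Iplus : ℝ)
    (hXmeas : MeasurableSet X) (hWmeas : MeasurableSet W)
    (hsupp : μ Wᶜ = 0)
    (hXstar : Xstar ⊆ X) (hXunsafe : Xunsafe ⊆ X) (hX0 : X0 ⊆ X)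
    (hρ0 : 0 ≤ ρ) (hρ1 : ρ < 1)
    (hcert : IsReachAvoidCert X Xstar Xunsafe X0 μ π f C ρ)
    (hXqne : Xq.Nonempty) (hXqX : Xq ⊆ X) (hdisj : Xq ∩ Xstar = ∅)
    (hInt : ∀ g, LocalizedChange Xq f g →
      ∀ x, Integrable (fun w => C (g x (π x) w)) μ)
    (h1 : 1 ≤ Iminus) (h2 : Iminus ≤ sInf (C '' Xq))
    (h3 : sInf (C '' Xq) ≤ Iplus) :
    min ρ (1 - 1 / Iminus) ≤ min ρ (1 - 1 / sInf (C '' Xq)) ∧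
    min ρ (1 - 1 / sInf (C '' Xq)) ≤ min ρ (1 - 1 / Iplus) ∧
    Reclaimable X Xstar Xunsafe X0 μ π f Xq C (min ρ (1 - 1 / Iminus)) ∧
    (∀ ρ', Reclaimable X Xstar Xunsafe X0 μ π f Xq C ρ' → ρ' ≤ ρ →
      ρ' ≤ min ρ (1 - 1 / Iplus)) := by
 classical
  obtain ⟨hC0, hC1, hCu, ε, hε, hdec⟩ := hcert
  set I := sInf (C '' Xq) with hI
  have hIm : (0:ℝ) < Iminus := lt_of_lt_of_le one_pos h1
  have hIpos : (0:ℝ) < I := lt_of_lt_of_le hIm h2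
  have hIp : (0:ℝ) < Iplus := lt_of_lt_of_le hIpos h3
  have hIlb : ∀ x ∈ Xq, I ≤ C x := by
    intro x hx
    exact csInf_le ⟨0, fun y ⟨z, _, hz⟩ => hz ▸ hC0 z⟩ ⟨x, hx, rfl⟩
  have part1 : min ρ (1 - 1 / Iminus) ≤ min ρ (1 - 1 / I) := by
    apply min_le_min le_rfl
    have := one_div_le_one_div_of_le hIm h2
    linarith
  have part2 : min ρ (1 - 1 / I) ≤ min ρ (1 - 1 / Iplus) := by
    apply min_le_min le_rfl
    have := one_div_le_one_div_of_le hIpos h3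
    linarith
  refine ⟨part1, part2, ?_, ?_⟩
  · -- Reclaimability of min ρ (1 - 1/Iminus)
    set r := min ρ (1 - 1 / Iminus) with hr
    have hrρ : r ≤ ρ := min_le_left _ _
    have hrr : r ≤ 1 - 1 / Iminus := min_le_right _ _
    have hr1 : r < 1 := lt_of_le_of_lt hrρ hρ1
    have hrpos : (0:ℝ) < 1 - r := by linarith
    have hρpos : (0:ℝ) < 1 - ρ := by linarith
    have hmono : 1 / (1 - r) ≤ 1 / (1 - ρ) :=
      one_div_le_one_div_of_le hρpos (by linarith)
    have hkey : 1 / (1 - r) ≤ Iminus := by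
      have h1d : 1 / Iminus ≤ 1 - r := by linarith
      have := one_div_le_one_div_of_le (one_div_pos.2 hIm) h1d
      rwa [one_div_one_div] at this
    refine ⟨le_min hρ0 (by
      have : 1 / Iminus ≤ 1 := by rw [div_le_one hIm]; exact h1
      linarith), hr1, ?_⟩
    intro g hg
    refine ⟨hC0, hC1, fun x hx => le_trans hmono (hCu x hx), ε, hε, ?_⟩
    intro x hx
    by_cases hxq : x ∈ Xq
    · right
      exact le_trans hkey (le_trans h2 (hIlb x hxq))
    · rcases hdec x hx with h | h
      · left
        have heq : (fun w => C x - C (g x (π x) w)) =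
            fun w => C x - C (f x (π x) w) :=
          funext fun w => by rw [hg x hxq]
        rw [heq]; exact h
      · right; exact le_trans hmono h
  · -- maximality
    intro ρ' ⟨hρ'0, hρ'1, hrec⟩ hle
    set g : (Fin n → ℝ) → (Fin m → ℝ) → (Fin p → ℝ) → (Fin n → ℝ) :=
      fun x u w => if x ∈ Xq then x else f x u w with hgdef
    have hgloc : LocalizedChange Xq f g := by
      intro x hx u w; simp [hgdef, hx]
    obtain ⟨_, _, _, ε', hε', hdec'⟩ := hrec g hgloc
    have hρ'pos : (0:ℝ) < 1 - ρ' := by linarith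
    have hlb : ∀ x ∈ Xq, 1 / (1 - ρ') ≤ C x := by
      intro x hxq
      have hxX : x ∈ X \ Xstar := by
        refine ⟨hXqX hxq, fun hst => ?_⟩
        have : x ∈ Xq ∩ Xstar := ⟨hxq, hst⟩
        rw [hdisj] at this
        exact this
      rcases hdec' x hxX with h | h
      · exfalso
        have hint0 : (∫ w, (C x - C (g x (π x) w)) ∂μ) = 0 := by
          have : (fun w => C x - C (g x (π x) w)) = fun _ => 0 :=
            funext fun w => by simp [hgdef, hxq]
          rw [this, integral_zero]
        rw [hint0] at h
        linarith
      · exact h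
    have hIlb' : 1 / (1 - ρ') ≤ I :=
      le_csInf (hXqne.image C) (fun y ⟨x, hx, hxy⟩ => hxy ▸ hlb x hx)
    have hIplb : 1 / (1 - ρ') ≤ Iplus := le_trans hIlb' h3
    refine le_min hle ?_
    have : 1 ≤ Iplus * (1 - ρ') := by
      rw [div_le_iff₀ hρ'pos] at hIplb; linarith
    have : 1 / Iplus ≤ 1 - ρ' := by
      rw [div_le_iff₀ hIp]; linarith
    linarith
end

section
/- Suppose C is a reach-avoid certificate for the dynamics f and threshold ρ ∈ [0,1), X? ⊆ X is nonempty, and inf{C(x) : x ∈ X?} ≥ 1/(1−ρ). Then the original threshold ρ is itself reclaimable: for every localized change g̃ of f within X?, C is a reach-avoid certificate for g̃ and threshold ρ. -/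
open MeasureTheory Set

theorem stmt8 {n m p : ℕ}
    (X Xstar Xunsafe X0 Xq : Set (Fin n → ℝ)) (W : Set (Fin p → ℝ))
    (μ : Measure (Fin p → ℝ)) [IsProbabilityMeasure μ]
    (π : (Fin n → ℝ) → (Fin m → ℝ))
    (f : (Fin n → ℝ) → (Fin m → ℝ) → (Fin p → ℝ) → (Fin n → ℝ))
    (C : (Fin n → ℝ) → ℝ) (ρ : ℝ)
    (hXmeas : MeasurableSet X) (hWmeas : MeasurableSet W)
    (hsupp : μ Wᶜ = 0)
    (hXstar : Xstar ⊆ X) (hXunsafe : Xunsafe ⊆ X) (hX0 : X0 ⊆ X)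
    (hρ0 : 0 ≤ ρ) (hρ1 : ρ < 1)
    (hcert : IsReachAvoidCert X Xstar Xunsafe X0 μ π f C ρ)
    (hXqne : Xq.Nonempty) (hXqX : Xq ⊆ X)
    (hI : 1 / (1 - ρ) ≤ sInf (C '' Xq))
    (hInt : ∀ g, LocalizedChange Xq f g →
      ∀ x, Integrable (fun w => C (g x (π x) w)) μ) :
    ∀ g, LocalizedChange Xq f g →
      IsReachAvoidCert X Xstar Xunsafe X0 μ π g C ρ := by
  intro g hg
  obtain ⟨h0, h1, h2, ε, hε, h3⟩ := hcert
  refine ⟨h0, h1, h2, ε, hε, ?_⟩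
  intro x hx
  by_cases hxq : x ∈ Xq
  · right
    calc 1 / (1 - ρ) ≤ sInf (C '' Xq) := hI
      _ ≤ C x := csInf_le ⟨0, fun y hy => by obtain ⟨z, _, rfl⟩ := hy; exact h0 z⟩
            ⟨x, hxq, rfl⟩
  · have : ∀ w, g x (π x) w = f x (π x) w := fun w => hg x hxq (π x) w
    have heq : (fun w => C x - C (g x (π x) w)) = fun w => C x - C (f x (π x) w) := by
      funext w; rw [this w]
    rw [heq]
    exact h3 x hx
end
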